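/- (Sherman–Morrison–Woodbury formula for invertible tensors.) Let A be a real tensor of size n₁×n₁×n₃ invertible with inverse A⁻¹, B a tensor of size n₂×n₂×n₃ invertible with inverse B⁻¹, and U of size n₁×n₂×n₃, V of size n₂×n₁×n₃. Suppose B⁻¹ + V*A⁻¹*U is invertible with inverse W, i.e. (B⁻¹+V*A⁻¹*U)*W = W*(B⁻¹+V*A⁻¹*U) = 𝓘. Then A + U*B*V is invertible with inverse A⁻¹ − A⁻¹*U*W*V*A⁻¹, i.e. (A+U*B*V)*(A⁻¹ − A⁻¹*U*W*V*A⁻¹) = (A⁻¹ − A⁻¹*U*W*V*A⁻¹)*(A+U*B*V) = 𝓘. -/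

import Mathlib

open scoped Matrix.Norms.L2Operator

noncomputable section

/-- The t-product of third-order tensors. -/
def tProd {n₁ n₂ n₃ n₄ : ℕ} [NeZero n₃] (A : Fin n₁ → Fin n₂ → ZMod n₃ → ℝ)
    (B : Fin n₂ → Fin n₄ → ZMod n₃ → ℝ) : Fin n₁ → Fin n₄ → ZMod n₃ → ℝ :=
  fun i j k => ∑ l : Fin n₂, ∑ m : ZMod n₃, A i l (k - m) * B l j m

/-- The Frobenius norm of a third-order tensor. -/
def frobNorm {n₁ n₂ n₃ : ℕ} [NeZero n₃] (A : Fin n₁ → Fin n₂ → ZMod n₃ → ℝ) : ℝ :=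
  Real.sqrt (∑ i : Fin n₁, ∑ j : Fin n₂, ∑ k : ZMod n₃, (A i j k) ^ 2)

/-- The block circulant matrix of a third-order tensor. -/
def bcirc {n₁ n₂ n₃ : ℕ} (A : Fin n₁ → Fin n₂ → ZMod n₃ → ℝ) :
    Matrix (Fin n₁ × ZMod n₃) (Fin n₂ × ZMod n₃) ℝ :=
  fun p q => A p.1 q.1 (p.2 - q.2)

/-- The spectral norm of a third-order tensor: the L2 operator norm of its
block circulant matrix. -/
def specNorm {n₁ n₂ n₃ : ℕ} [NeZero n₃] (A : Fin n₁ → Fin n₂ → ZMod n₃ → ℝ) : ℝ :=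
  ‖bcirc A‖

/-- The identity tensor. -/
def tId (n n₃ : ℕ) : Fin n → Fin n → ZMod n₃ → ℝ :=
  fun i j k => if i = j ∧ k = 0 then 1 else 0

/-- The tensor transpose. -/
def tTrans {n₁ n₂ n₃ : ℕ} (A : Fin n₁ → Fin n₂ → ZMod n₃ → ℝ) :
    Fin n₂ → Fin n₁ → ZMod n₃ → ℝ :=
  fun i j k => A j i (-k)

/-- `X` is a Moore-Penrose inverse of `A`. -/
def IsMPInv {n₁ n₂ n₃ : ℕ} [NeZero n₃] (A : Fin n₁ → Fin n₂ → ZMod n₃ → ℝ)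
    (X : Fin n₂ → Fin n₁ → ZMod n₃ → ℝ) : Prop :=
  tProd (tProd A X) A = A ∧ tProd (tProd X A) X = X ∧
    tTrans (tProd A X) = tProd A X ∧ tTrans (tProd X A) = tProd X A

/-- The `i`-th DFT block of a third-order tensor. -/
def dftBlock {n₁ n₂ n₃ : ℕ} [NeZero n₃] (A : Fin n₁ → Fin n₂ → ZMod n₃ → ℝ) (i : ZMod n₃) :
    Matrix (Fin n₁) (Fin n₂) ℂ :=
  fun p q => ∑ k : ZMod n₃,
    Complex.exp (-2 * Real.pi * Complex.I * (i.val : ℂ) * (k.val : ℂ) / (n₃ : ℂ)) * (A p q k : ℂ)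

end

/-! Block circulant matrices turn the t-product into matrix multiplication, so the formula is
the Woodbury identity for the matrices `bcirc A`, `bcirc B`, `bcirc U`, `bcirc V`, transported
back along the injective map `bcirc`. -/

section BlockCirculant

variable {n₁ n₂ n₃ n₄ : ℕ}

lemma bcirc_add (A B : Fin n₁ → Fin n₂ → ZMod n₃ → ℝ) : bcirc (A + B) = bcirc A + bcirc B :=
  rfl

lemma bcirc_sub (A B : Fin n₁ → Fin n₂ → ZMod n₃ → ℝ) : bcirc (A - B) = bcirc A - bcirc B :=
  rfl

lemma bcirc_tId (n : ℕ) : bcirc (tId n n₃) = 1 := by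
  ext ⟨i, k⟩ ⟨j, k'⟩
  simp [bcirc, tId, Matrix.one_apply, Prod.ext_iff, sub_eq_zero]

lemma bcirc_injective : Function.Injective (bcirc : (Fin n₁ → Fin n₂ → ZMod n₃ → ℝ) → _) := by
  intro A B h
  funext i j k
  simpa [bcirc] using congrFun (congrFun h (i, k)) (j, 0)

variable [NeZero n₃]

lemma bcirc_tProd (A : Fin n₁ → Fin n₂ → ZMod n₃ → ℝ) (B : Fin n₂ → Fin n₄ → ZMod n₃ → ℝ) :
    bcirc (tProd A B) = bcirc A * bcirc B := by
  ext ⟨i, k⟩ ⟨j, k'⟩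
  simp only [bcirc, tProd, Matrix.mul_apply, Fintype.sum_prod_type]
  refine Finset.sum_congr rfl fun l _ => Fintype.sum_equiv (Equiv.addRight k') _ _ fun m => ?_
  simp only [Equiv.coe_addRight, add_sub_cancel_right]
  ring_nf

lemma tProd_eq_tId_iff {n : ℕ} (A : Fin n → Fin n₂ → ZMod n₃ → ℝ)
    (B : Fin n₂ → Fin n → ZMod n₃ → ℝ) : tProd A B = tId n n₃ ↔ bcirc A * bcirc B = 1 := by
  rw [← bcirc_tProd, ← bcirc_tId, bcirc_injective.eq_iff]

end BlockCirculant

theorem smw_formula_invertible_general (n₁ n₂ n₃ : ℕ) [NeZero n₃]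
    (A Ainv : Fin n₁ → Fin n₁ → ZMod n₃ → ℝ)
    (B Binv : Fin n₂ → Fin n₂ → ZMod n₃ → ℝ)
    (U : Fin n₁ → Fin n₂ → ZMod n₃ → ℝ) (V : Fin n₂ → Fin n₁ → ZMod n₃ → ℝ)
    (W : Fin n₂ → Fin n₂ → ZMod n₃ → ℝ)
    (hA₁ : tProd A Ainv = tId n₁ n₃) (hA₂ : tProd Ainv A = tId n₁ n₃)
    (hB₁ : tProd B Binv = tId n₂ n₃) (hB₂ : tProd Binv B = tId n₂ n₃)
    (hW₁ : tProd (Binv + tProd (tProd V Ainv) U) W = tId n₂ n₃)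
    (hW₂ : tProd W (Binv + tProd (tProd V Ainv) U) = tId n₂ n₃) :
    tProd (A + tProd (tProd U B) V)
        (Ainv - tProd (tProd (tProd (tProd Ainv U) W) V) Ainv) = tId n₁ n₃ ∧
      tProd (Ainv - tProd (tProd (tProd (tProd Ainv U) W) V) Ainv)
        (A + tProd (tProd U B) V) = tId n₁ n₃ := by
  simp only [tProd_eq_tId_iff, bcirc_tProd, bcirc_add, bcirc_sub] at *
  let _ : Invertible (bcirc A) := ⟨bcirc Ainv, hA₂, hA₁⟩
  let _ : Invertible (bcirc B) := ⟨bcirc Binv, hB₂, hB₁⟩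
  let _ : Invertible (⅟(bcirc B) + bcirc V * ⅟(bcirc A) * bcirc U) := ⟨bcirc W, hW₂, hW₁⟩
  exact ⟨Matrix.add_mul_mul_invOf_mul_eq_one _ _ _ _,
    Matrix.add_mul_mul_invOf_mul_eq_one' (bcirc A) (bcirc U) (bcirc B) (bcirc V)⟩

theorem smw_formula_invertible (n₁ n₂ n₃ : ℕ) [NeZero n₃] (hn₁ : 0 < n₁) (hn₂ : 0 < n₂)
    (A Ainv : Fin n₁ → Fin n₁ → ZMod n₃ → ℝ)
    (B Binv : Fin n₂ → Fin n₂ → ZMod n₃ → ℝ)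
    (U : Fin n₁ → Fin n₂ → ZMod n₃ → ℝ) (V : Fin n₂ → Fin n₁ → ZMod n₃ → ℝ)
    (W : Fin n₂ → Fin n₂ → ZMod n₃ → ℝ)
    (hA₁ : tProd A Ainv = tId n₁ n₃) (hA₂ : tProd Ainv A = tId n₁ n₃)
    (hB₁ : tProd B Binv = tId n₂ n₃) (hB₂ : tProd Binv B = tId n₂ n₃)
    (hW₁ : tProd (Binv + tProd (tProd V Ainv) U) W = tId n₂ n₃)
    (hW₂ : tProd W (Binv + tProd (tProd V Ainv) U) = tId n₂ n₃) :
    tProd (A + tProd (tProd U B) V)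
        (Ainv - tProd (tProd (tProd (tProd Ainv U) W) V) Ainv) = tId n₁ n₃ ∧
      tProd (Ainv - tProd (tProd (tProd (tProd Ainv U) W) V) Ainv)
        (A + tProd (tProd U B) V) = tId n₁ n₃ :=
  smw_formula_invertible_general n₁ n₂ n₃ A Ainv B Binv U V W hA₁ hA₂ hB₁ hB₂ hW₁ hW₂
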